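/- Let (A, R, N) be a strongly consistent AFN and ADF^FN its corresponding ADF. A set of arguments X ⊆ A is strongly coherent in (A, R, N) if and only if it is a pd-acyclic conflict-free extension of ADF^FN. -/

import Mathlib

open Classical

universe u

namespace Dialectical

variable {α : Type u}

/-! ### Two-valued (partial) interpretations -/

/-- A partial two-valued interpretation: `some true` = t, `some false` = f, `none` = undefined. -/
abbrev Interp (α : Type u) := α → Option Bool

/-- The domain of an interpretation. -/
def idom (v : Interp α) : Set α := {a | v a ≠ none}

/-- The set of arguments mapped to t. -/
def tset (v : Interp α) : Set α := {a | v a = some true}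

/-- The set of arguments mapped to f. -/
def fset (v : Interp α) : Set α := {a | v a = some false}

/-- `w` is a completion of `v` to the set `Z`. -/
def Completion (v w : Interp α) (Z : Set α) : Prop :=
  idom w = Z ∧ ∀ a ∈ idom v, w a = v a

/-- The interpretation assigning t on `T` and f on `F' \ T`. -/
noncomputable def mkInterp (T F' : Set α) : Interp α :=
  fun a => if a ∈ T then some true else if a ∈ F' then some false else none

/-! ### Abstract dialectical frameworks -/

/-- An abstract dialectical framework: links and acceptance conditions
(`true` = in, `false` = out). -/
structure ADF (α : Type u) where
  L : α → α → Prop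
  C : α → Set α → Bool

namespace ADF

variable (D : ADF α)

/-- The parents of an argument. -/
def par (a : α) : Set α := {p | D.L p a}

/-- Evaluating the acceptance condition of `s` under an interpretation. -/
def evalCond (s : α) (w : Interp α) : Bool := D.C s (tset w ∩ D.par s)

/-- `s` is decisively in w.r.t. `v`. -/
def DecisivelyIn (v : Interp α) (s : α) : Prop :=
  ∀ w : Interp α, Completion v w (idom v ∪ D.par s) → D.evalCond s w = true

/-- `s` is decisively out w.r.t. `v`. -/
def DecisivelyOut (v : Interp α) (s : α) : Prop :=
  ∀ w : Interp α, Completion v w (idom v ∪ D.par s) → D.evalCond s w = false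

/-- `v` is a minimal decisively in interpretation for `s` (`v ∈ min_dec(in,s)`). -/
def MinDecIn (v : Interp α) (s : α) : Prop :=
  D.DecisivelyIn v s ∧
  ∀ w : Interp α, D.DecisivelyIn w s → tset w ⊆ tset v → fset w ⊆ fset v →
    tset w = tset v ∧ fset w = fset v

/-- `pd` is a positive dependency function on `X`. -/
def PDFun (X : Set α) (pd : α → Option (Interp α)) : Prop :=
  ∀ a ∈ X,
    (∀ v, pd a = some v → D.MinDecIn v a ∧ tset v ⊆ X) ∧
    (pd a = none → ¬ ∃ v, D.MinDecIn v a ∧ tset v ⊆ X)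

end ADF

/-- The subset of `X` on which `pd` is non-null. -/
def soundDom (X : Set α) (pd : α → Option (Interp α)) : Set α :=
  {a ∈ X | pd a ≠ none}

namespace ADF
variable (D : ADF α)

/-- `pd` is a maximally sound pd-function of `X`. -/
def MaxSound (X : Set α) (pd : α → Option (Interp α)) : Prop :=
  D.PDFun X pd ∧
  ¬ ∃ (X'' : Set α) (pd' : α → Option (Interp α)),
      D.PDFun X'' pd' ∧ (∀ a ∈ X'', pd' a ≠ none) ∧
      soundDom X pd ⊂ X'' ∧ X'' ⊆ X ∧
      ∀ a ∈ soundDom X pd, pd' a = pd a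

end ADF

/-- The t-part of the interpretation assigned by `pd` to `a`. -/
def pdT (pd : α → Option (Interp α)) (a : α) : Set α :=
  {b | ∃ v, pd a = some v ∧ b ∈ tset v}

/-- The f-part of the interpretation assigned by `pd` to `a`. -/
def pdF (pd : α → Option (Interp α)) (a : α) : Set α :=
  {b | ∃ v, pd a = some v ∧ b ∈ fset v}

namespace ADF

variable (D : ADF α)

end ADF

/-- `(Fs, G, B)` is a partially acyclic positive dependency evaluation for `x`
based on the pd-function `pd` of `X`. -/
def IsPAEvalWith (pd : α → Option (Interp α)) (X : Set α)
    (x : α) (Fs : Set α) (G : List α) (B : Set α) : Prop :=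
  (∀ a ∈ G, a ∉ Fs) ∧ G.Nodup ∧
  x ∈ X ∧ Fs ⊆ X ∧ (∀ a ∈ G, a ∈ X) ∧
  (∀ a ∈ Fs, pd a ≠ none) ∧ (∀ a ∈ G, pd a ≠ none) ∧
  (G = [] → x ∈ Fs) ∧ (G ≠ [] → G.getLast? = some x) ∧
  (∀ i : ℕ, ∀ h : i < G.length,
      pdT pd (G.get ⟨i, h⟩) ⊆
        Fs ∪ {b | ∃ j : ℕ, ∃ hj : j < G.length, j < i ∧ G.get ⟨j, hj⟩ = b}) ∧
  (∀ a ∈ Fs, pdT pd a ⊆ Fs) ∧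
  (∀ a ∈ Fs, ∃ b ∈ Fs, a ∈ pdT pd b) ∧
  B = (⋃ a ∈ Fs, pdF pd a) ∪ ⋃ a ∈ {c | c ∈ G}, pdF pd a

namespace ADF
variable (D : ADF α)

/-- `(Fs, G, B)` is a partially acyclic positive dependency evaluation for `x` on `X`. -/
def PAEval (X : Set α) (x : α) (Fs : Set α) (G : List α) (B : Set α) : Prop :=
  ∃ pd, D.MaxSound X pd ∧ IsPAEvalWith pd X x Fs G B

/-- `(G, B)` is an acyclic positive dependency evaluation for `x` on `X`. -/
def AcyclicEval (X : Set α) (x : α) (G : List α) (B : Set α) : Prop :=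
  D.PAEval X x ∅ G B

/-- The standard discarded set `X⁺`. -/
def stdDiscarded (X : Set α) : Set α :=
  {a | ∀ Fs G B, D.PAEval Set.univ a Fs G B → (B ∩ X).Nonempty}

/-- The partially acyclic discarded set `X^{p+}`. -/
def pDiscarded (X : Set α) : Set α :=
  {a | ¬ ∃ Fs G B, D.PAEval Set.univ a Fs G B ∧ Fs ⊆ X ∧ B ∩ X = ∅}

/-- The acyclic discarded set `X^{a+}`. -/
def aDiscarded (X : Set α) : Set α :=
  {a | ∀ G B, D.AcyclicEval Set.univ a G B → (B ∩ X).Nonempty}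

/-- The standard range of `X`. -/
noncomputable def stdRange (X : Set α) : Interp α := mkInterp X (D.stdDiscarded X \ X)

/-- The partially acyclic range of `X`. -/
noncomputable def pRange (X : Set α) : Interp α := mkInterp X (D.pDiscarded X \ X)

/-- The acyclic range of `X`. -/
noncomputable def aRange (X : Set α) : Interp α := mkInterp X (D.aDiscarded X \ X)

/-- Conflict-freeness in an ADF. -/
def ConflictFree (X : Set α) : Prop := ∀ s ∈ X, D.C s (X ∩ D.par s) = true

/-- pd-acyclic conflict-freeness in an ADF. -/
def PDAcyclicCF (X : Set α) : Prop :=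
  ∀ a ∈ X, ∃ G B, D.AcyclicEval X a G B ∧ B ∩ X = ∅

def CCAdmissible (X : Set α) : Prop :=
  D.ConflictFree X ∧ ∀ e ∈ X, D.DecisivelyIn (D.stdRange X) e

def CA2Admissible (X : Set α) : Prop :=
  D.ConflictFree X ∧ ∀ e ∈ X, D.DecisivelyIn (D.pRange X) e

def AAAdmissible (X : Set α) : Prop :=
  D.PDAcyclicCF X ∧ ∀ e ∈ X, D.DecisivelyIn (D.aRange X) e

def CCComplete (X : Set α) : Prop :=
  D.CCAdmissible X ∧ ∀ e, D.DecisivelyIn (D.stdRange X) e → e ∈ X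

def CA2Complete (X : Set α) : Prop :=
  D.CA2Admissible X ∧ ∀ e, D.DecisivelyIn (D.pRange X) e → e ∈ X

def AAComplete (X : Set α) : Prop :=
  D.AAAdmissible X ∧ ∀ e, D.DecisivelyIn (D.aRange X) e → e ∈ X

def CCPreferred (X : Set α) : Prop :=
  D.CCAdmissible X ∧ ∀ Y, D.CCAdmissible Y → X ⊆ Y → X = Y

def CA2Preferred (X : Set α) : Prop :=
  D.CA2Admissible X ∧ ∀ Y, D.CA2Admissible Y → X ⊆ Y → X = Y

def AAPreferred (X : Set α) : Prop :=
  D.AAAdmissible X ∧ ∀ Y, D.AAAdmissible Y → X ⊆ Y → X = Y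

/-- `X` is a model of the ADF. -/
def IsModel (X : Set α) : Prop :=
  D.ConflictFree X ∧ ∀ a, a ∉ X → D.C a (X ∩ D.par a) = false

/-- `X` is a stable extension of the ADF. -/
def IsStable (X : Set α) : Prop :=
  D.PDAcyclicCF X ∧ D.aDiscarded X = Xᶜ

/-- `X` is the grounded extension (the least cc-complete extension). -/
def IsGrounded (X : Set α) : Prop :=
  D.CCComplete X ∧ ∀ Y, D.CCComplete Y → X ⊆ Y

/-- `X` is the acyclic grounded extension (the least aa-complete extension). -/
def IsAcyclicGrounded (X : Set α) : Prop :=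
  D.AAComplete X ∧ ∀ Y, D.AAComplete Y → X ⊆ Y

/-- The link `(r,s)` is supporting. -/
def Supporting (r s : α) : Prop :=
  ¬ ∃ R' ⊆ D.par s, D.C s R' = true ∧ D.C s (R' ∪ {r}) = false

/-- The link `(r,s)` is attacking. -/
def Attacking (r s : α) : Prop :=
  ¬ ∃ R' ⊆ D.par s, D.C s R' = false ∧ D.C s (R' ∪ {r}) = true

/-- Bipolar ADFs. -/
def IsBADF : Prop := ∀ r s, D.L r s → D.Supporting r s ∨ D.Attacking r s

/-- Positive dependency acyclic ADFs (AADF⁺): every partially acyclic evaluation is acyclic. -/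
def IsAADFplus : Prop := ∀ X x Fs G B, D.PAEval X x Fs G B → Fs = ∅

end ADF

/-! ### Frameworks with sets of attacking arguments (SETAFs) -/

/-- A framework with sets of attacking arguments. -/
structure SETAF (α : Type u) where
  R : Set α → α → Prop
  nonempty_of_R : ∀ S a, R S a → S.Nonempty

namespace SETAF

variable (sf : SETAF α)

/-- `X` is conflict-free in the SETAF. -/
def ConflictFree (X : Set α) : Prop := ¬ ∃ S ⊆ X, ∃ a ∈ X, sf.R S a

/-- The discarded set of `X` in the SETAF. -/
def discarded (X : Set α) : Set α := {b | ∃ S ⊆ X, sf.R S b}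

/-- `X` defends `a` in the SETAF. -/
def Defends (X : Set α) (a : α) : Prop :=
  ∀ S, sf.R S a → ∃ s ∈ S, s ∈ sf.discarded X

def Admissible (X : Set α) : Prop := sf.ConflictFree X ∧ ∀ a ∈ X, sf.Defends X a

def Complete (X : Set α) : Prop := sf.Admissible X ∧ ∀ a, sf.Defends X a → a ∈ X

def Preferred (X : Set α) : Prop :=
  sf.Admissible X ∧ ∀ Y, sf.Admissible Y → X ⊆ Y → X = Y

/-- `X` is the grounded extension: the least complete extension. -/
def IsGrounded (X : Set α) : Prop := sf.Complete X ∧ ∀ Y, sf.Complete Y → X ⊆ Y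

def Stable (X : Set α) : Prop := sf.ConflictFree X ∧ sf.discarded X = Xᶜ

/-- The ADF corresponding to a SETAF. -/
noncomputable def toADF : ADF α where
  L x y := ∃ B : Set α, x ∈ B ∧ sf.R B y
  C a B := decide (¬ ∃ S, sf.R S a ∧ S ⊆ B)

end SETAF

/-! ### Extended argumentation frameworks with collective defense attacks (EAFCs) -/

/-- An EAFC: binary attacks `R` and collective defense attacks `D` on attacks. -/
structure EAFC (α : Type u) where
  R : α → α → Prop
  D : Set α → α → α → Prop
  nonempty_of_D : ∀ C a b, D C a b → C.Nonempty
  attack_of_D : ∀ C a b, D C a b → R a b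

namespace EAFC

variable (E : EAFC α)

/-- `a` defeats `b` w.r.t. `X`. -/
def Defeats (X : Set α) (a b : α) : Prop :=
  E.R a b ∧ ¬ ∃ C ⊆ X, E.D C a b

/-- `RS` is a reinstatement set on `X` for the defeat of `b` by `a`. -/
def Reinstatement (X : Set α) (RS : Set (α × α)) (a b : α) : Prop :=
  RS.Finite ∧
  (∀ p ∈ RS, p.1 ∈ X ∧ E.Defeats X p.1 p.2) ∧
  (a, b) ∈ RS ∧
  ∀ p ∈ RS, ∀ C : Set α, E.D C p.1 p.2 → ∃ q ∈ RS, q.2 ∈ C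

/-- The discarded set `X⁺` of `X` in the EAFC. -/
def discarded (X : Set α) : Set α :=
  {b | ∃ a ∈ X, E.Defeats X a b ∧ ∃ RS, E.Reinstatement X RS a b}

/-- `X` defends `a` in the EAFC. -/
def Defends (X : Set α) (a : α) : Prop :=
  ∀ b, E.Defeats X b a → b ∈ E.discarded X

/-- `X` is conflict-free in the EAFC. -/
def ConflictFree (X : Set α) : Prop := ¬ ∃ a ∈ X, ∃ b ∈ X, E.Defeats X a b

def Admissible (X : Set α) : Prop := E.ConflictFree X ∧ ∀ a ∈ X, E.Defends X a

def Complete (X : Set α) : Prop := E.Admissible X ∧ ∀ a, E.Defends X a → a ∈ X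

def Preferred (X : Set α) : Prop :=
  E.Admissible X ∧ ∀ Y, E.Admissible Y → X ⊆ Y → X = Y

def Stable (X : Set α) : Prop :=
  E.ConflictFree X ∧ ∀ b, b ∉ X → ∃ a ∈ X, E.Defeats X a b

/-- The characteristic function of the EAFC. -/
def charFun (X : Set α) : Set α := {a | E.Defends X a}

/-- The grounded extension of the EAFC. -/
def grounded : Set α := ⋃ i : ℕ, E.charFun^[i] ∅

/-- Every argument has finitely many attackers, every attack finitely many defense attackers. -/
def Finitary : Prop :=
  (∀ a, {b | E.R b a}.Finite) ∧ ∀ a b, {C | E.D C a b}.Finite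

/-- Strong consistency of an EAFC. -/
def StronglyConsistent : Prop :=
  ¬ ∃ (x y z : α) (X : Set α), E.R x y ∧ x ∈ X ∧ E.D X z y

/-- The EAFC is bounded hierarchical. -/
def BoundedHierarchical : Prop :=
  ∃ n : ℕ, ∃ hn : 0 < n,
    ∃ (As : Fin n → Set α) (Rs : Fin n → α → α → Prop)
      (Ds : Fin n → Set α → α → α → Prop),
      (∀ C a b, ¬ Ds ⟨n - 1, Nat.sub_lt hn one_pos⟩ C a b) ∧
      (Set.univ = ⋃ i, As i) ∧
      (∀ a b, E.R a b ↔ ∃ i, Rs i a b) ∧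
      (∀ C a b, E.D C a b ↔ ∃ i, Ds i C a b) ∧
      (∀ i a b, Rs i a b → a ∈ As i ∧ b ∈ As i) ∧
      (∀ i C a b, Ds i C a b → Rs i a b ∧
        ∃ h : (i : ℕ) + 1 < n, C ⊆ As ⟨(i : ℕ) + 1, h⟩)

/-- The ADF corresponding to a strongly consistent EAFC. -/
noncomputable def toADF : ADF α where
  L a b := E.R a b ∨ ∃ (c : α) (X : Set α), a ∈ X ∧ E.D X c b
  C a B := decide (¬ ∃ x ∈ B, E.R x a ∧ ¬ ∃ B' ⊆ B, E.D B' x a)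

end EAFC

/-! ### Argumentation frameworks with necessities (AFNs) -/

/-- An AFN: binary attacks `R` and necessity relation `N`. -/
structure AFN (α : Type u) where
  R : α → α → Prop
  N : Set α → α → Prop
  nonempty_of_N : ∀ B a, N B a → B.Nonempty

namespace AFN

variable (fn : AFN α)

/-- `G` is a powerful sequence for `a` on `X`. -/
def PowerfulSeq (X : Set α) (G : List α) (a : α) : Prop :=
  G ≠ [] ∧ (∀ b ∈ G, b ∈ X) ∧ G.getLast? = some a ∧
  ∀ i : ℕ, ∀ h : i < G.length, ∀ B : Set α, fn.N B (G.get ⟨i, h⟩) →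
    ∃ j : ℕ, ∃ hj : j < G.length, j < i ∧ G.get ⟨j, hj⟩ ∈ B

/-- `a` is powerful in `X`. -/
def Powerful (X : Set α) (a : α) : Prop :=
  a ∈ X ∧ ∃ G, fn.PowerfulSeq X G a

/-- `X` is coherent. -/
def Coherent (X : Set α) : Prop := ∀ a ∈ X, fn.Powerful X a

/-- The discarded set `X^att` of `X` in the AFN. -/
def discardedAtt (X : Set α) : Set α :=
  {a | ∀ C, fn.Coherent C → a ∈ C → ∃ c ∈ C, ∃ e ∈ X, fn.R e c}

/-- `X` is conflict-free in the AFN. -/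
def ConflictFree (X : Set α) : Prop := ¬ ∃ a ∈ X, ∃ b ∈ X, fn.R a b

/-- `X` is strongly coherent. -/
def StronglyCoherent (X : Set α) : Prop := fn.ConflictFree X ∧ fn.Coherent X

/-- The deactivated set `X⁺` of `X` in the AFN. -/
def deactivated (X : Set α) : Set α :=
  {a | (∃ e ∈ X, fn.R e a) ∨ ∃ B, fn.N B a ∧ X ∩ B = ∅}

/-- `X` defends `a` in the AFN. -/
def Defends (X : Set α) (a : α) : Prop :=
  fn.Coherent (X ∪ {a}) ∧ ∀ b, fn.R b a → b ∈ fn.discardedAtt X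

def Admissible (X : Set α) : Prop := fn.StronglyCoherent X ∧ ∀ a ∈ X, fn.Defends X a

def Complete (X : Set α) : Prop := fn.Admissible X ∧ ∀ a, fn.Defends X a → a ∈ X

def Preferred (X : Set α) : Prop :=
  fn.Admissible X ∧ ∀ Y, fn.Admissible Y → X ⊆ Y → X = Y

/-- `X` is the grounded extension: the least complete extension. -/
def IsGrounded (X : Set α) : Prop := fn.Complete X ∧ ∀ Y, fn.Complete Y → X ⊆ Y

/-- Stability via completeness and the deactivated set. -/
def Stable (X : Set α) : Prop := fn.Complete X ∧ fn.deactivated X = Xᶜ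

/-- Stability via strong coherence and the discarded set. -/
def StableAtt (X : Set α) : Prop :=
  fn.StronglyCoherent X ∧ fn.discardedAtt X = Xᶜ

/-- Strong consistency of an AFN: no argument is both supported and attacked by
the same argument. -/
def StronglyConsistent : Prop :=
  ∀ a : α, {b | ∃ B, b ∈ B ∧ fn.N B a} ∩ {b | fn.R b a} = ∅

/-- The ADF corresponding to a strongly consistent AFN. -/
noncomputable def toADF : ADF α where
  L x y := fn.R x y ∨ ∃ B, x ∈ B ∧ fn.N B y
  C a P := decide (¬ ((∃ p ∈ P, fn.R p a) ∨ ∃ Z, fn.N Z a ∧ Z ∩ P = ∅))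

end AFN

end Dialectical

/-!
For the ADF of an AFN, an interpretation is decisively in for `a` exactly when it maps every
attacker of `a` to f and its t-part meets every necessity set of `a`. Hence the minimal ones
are built from minimal hitting sets `T` of the necessity sets, and strong consistency keeps `T`
apart from the attackers. An acyclic evaluation is then a powerful sequence whose set `B`
contains the attackers of its last element, so `B ∩ X = ∅` for every element of `X` is
conflict-freeness. Conversely, if `X` is coherent, rank its arguments by the length of their
shortest powerful sequence; minimal hitting sets among arguments of lower rank form a sound
pd-function, and listing the arguments of lower rank by increasing rank gives the evaluation.
-/

lemma List.Pairwise.index_lt_of_rank_lt {α β : Type*} [Preorder β] {r : α → β} {l : List α}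
    (hl : l.Pairwise (fun x y => r x ≤ r y)) {i j : ℕ} (hi : i < l.length) (hj : j < l.length)
    (h : r l[j] < r l[i]) : j < i := by
  by_contra! hij
  rcases hij.eq_or_lt with rfl | hlt
  · exact lt_irrefl _ h
  · exact (List.pairwise_iff_getElem.mp hl i j hi hj hlt).not_gt h

namespace Dialectical

variable {α : Type*}

section Interp

variable {v w : Interp α} {T F U Z : Set α}

lemma tset_subset_idom : tset v ⊆ idom v := by
  intro a ha
  simp_all [tset, idom]

@[simp]
lemma tset_mkInterp : tset (mkInterp T F) = T := by
  ext a
  by_cases hT : a ∈ T <;> simp [tset, mkInterp, hT]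

@[simp]
lemma fset_mkInterp : fset (mkInterp T F) = F \ T := by
  ext a
  by_cases hT : a ∈ T <;> by_cases hF : a ∈ F <;> simp [fset, mkInterp, hT, hF]

lemma idom_mkInterp : idom (mkInterp T F) = T ∪ F := by
  ext a
  by_cases hT : a ∈ T <;> by_cases hF : a ∈ F <;> simp [idom, mkInterp, hT, hF]

lemma Completion.tset_subset (h : Completion v w Z) : tset v ⊆ tset w := fun a ha =>
  (h.2 a (tset_subset_idom ha)).trans ha

lemma Completion.eq_of_mem_fset (h : Completion v w Z) {a : α} (ha : a ∈ fset v) :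
    w a = some false :=
  (h.2 a (by simp_all [fset, idom])).trans ha

lemma completion_mkInterp (hUZ : U ⊆ Z) (hU : Disjoint U (idom v)) :
    Completion v (mkInterp (tset v ∪ U) (idom v ∪ Z)) (idom v ∪ Z) := by
  refine ⟨?_, fun a ha => ?_⟩
  · rw [idom_mkInterp]
    exact Set.union_eq_self_of_subset_left
      (Set.union_subset_union tset_subset_idom hUZ)
  · have haU : a ∉ U := fun h => hU.ne_of_mem h ha rfl
    obtain ⟨b, hb⟩ := Option.ne_none_iff_exists'.mp ha
    cases b <;> simp_all [mkInterp, tset]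

end Interp

lemma pdT_eq_tset {pd : α → Option (Interp α)} {a : α} {v : Interp α} (h : pd a = some v) :
    pdT pd a = tset v := by
  simp [pdT, h]

lemma pdF_eq_fset {pd : α → Option (Interp α)} {a : α} {v : Interp α} (h : pd a = some v) :
    pdF pd a = fset v := by
  simp [pdF, h]

namespace ADF

variable {D : ADF α} {X : Set α} {pd : α → Option (Interp α)} {a : α} {G : List α}
  {B : Set α}

lemma maxSound_of_forall_ne_none (hpd : D.PDFun X pd) (hsound : ∀ a ∈ X, pd a ≠ none) :
    D.MaxSound X pd := by
  refine ⟨hpd, fun ⟨X'', _, _, _, hlt, hle, _⟩ => hlt.not_subset ?_⟩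
  exact fun b hb => ⟨hle hb, hsound b (hle hb)⟩

lemma acyclicEval_of_list (hpd : D.PDFun X pd) (hsound : ∀ a ∈ X, pd a ≠ none)
    (hnd : G.Nodup) (hGX : ∀ b ∈ G, b ∈ X) (hlast : G.getLast? = some a)
    (horder : ∀ i (hi : i < G.length),
      pdT pd (G.get ⟨i, hi⟩) ⊆
        {b | ∃ j, ∃ hj : j < G.length, j < i ∧ G.get ⟨j, hj⟩ = b}) :
    D.AcyclicEval X a G (⋃ b ∈ {c | c ∈ G}, pdF pd b) := by
  have haG : a ∈ G := List.mem_of_getLast? hlast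
  refine ⟨pd, maxSound_of_forall_ne_none hpd hsound, fun _ _ => id, hnd, hGX a haG,
    Set.empty_subset X, hGX, fun _ => False.elim, fun b hb => hsound b (hGX b hb),
    fun hG => absurd haG (hG ▸ List.not_mem_nil), fun _ => hlast,
    fun i hi => (horder i hi).trans Set.subset_union_right,
    fun _ => False.elim, fun _ => False.elim, by simp⟩

lemma PDFun.pdT_subset (hpd : D.PDFun X pd) (ha : a ∈ X) : pdT pd a ⊆ X := by
  rintro b ⟨v, hv, hb⟩
  exact ((hpd a ha).1 v hv).2 hb

lemma pdAcyclicCF_of_rank [Finite α] (r : α → ℕ) (hpd : D.PDFun X pd)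
    (hsound : ∀ a ∈ X, pd a ≠ none) (hF : ∀ a ∈ X, pdF pd a ∩ X = ∅)
    (hr : ∀ a ∈ X, ∀ b ∈ pdT pd a, r b < r a) :
    D.PDAcyclicCF X := by
  intro a ha
  -- the evaluation for `a`: the arguments of `X` below `a`, by increasing rank, then `a`
  set L := (Set.toFinite {b ∈ X | r b < r a}).toFinset.toList.mergeSort
    (fun x y => decide (r x ≤ r y))
  have hL : ∀ b, b ∈ L ↔ b ∈ X ∧ r b < r a := by simp [L]
  have hLsorted : L.Pairwise (fun x y => r x ≤ r y) := by
    simpa using List.pairwise_mergeSort (le := fun x y => decide (r x ≤ r y))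
      (by simp only [decide_eq_true_eq]; omega)
      (by simp only [Bool.or_eq_true, decide_eq_true_eq]; omega) _
  set G := L ++ [a]
  have hGsorted : G.Pairwise (fun x y => r x ≤ r y) :=
    List.pairwise_append.mpr ⟨hLsorted, List.pairwise_singleton _ _,
      fun b hb c hc => (List.mem_singleton.mp hc) ▸ ((hL b).mp hb).2.le⟩
  have hGX : ∀ b ∈ G, b ∈ X ∧ r b ≤ r a := by
    simp only [G, List.mem_append, List.mem_singleton]
    rintro b (hb | rfl)
    exacts [((hL b).mp hb).imp_right le_of_lt, ⟨ha, le_rfl⟩]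
  have hGnd : G.Nodup := by
    refine List.nodup_append.mpr
      ⟨(List.mergeSort_perm _ _).nodup_iff.mpr (Finset.nodup_toList _), List.nodup_singleton a,
        fun b hb c hc hbc => ?_⟩
    rw [List.mem_singleton.mp hc] at hbc
    exact lt_irrefl _ (hbc ▸ ((hL b).mp hb).2)
  refine ⟨G, _, acyclicEval_of_list hpd hsound hGnd (fun b hb => (hGX b hb).1)
    List.getLast?_concat ?_, ?_⟩
  · intro i hi b hb
    obtain ⟨hiX, hia⟩ := hGX _ (G.get_mem ⟨i, hi⟩)
    have hbi := hr _ hiX b hb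
    have hbG : b ∈ G :=
      List.mem_append_left _ ((hL b).mpr ⟨hpd.pdT_subset hiX hb, hbi.trans_le hia⟩)
    obtain ⟨j, hj, rfl⟩ := List.mem_iff_getElem.mp hbG
    exact ⟨j, hj, hGsorted.index_lt_of_rank_lt hi hj hbi, rfl⟩
  · refine Set.eq_empty_of_forall_notMem fun b ⟨hbB, hbX⟩ => ?_
    obtain ⟨c, hc, hbc⟩ := Set.mem_iUnion₂.mp hbB
    exact (hF c (hGX c hc).1).subset ⟨hbc, hbX⟩

namespace AcyclicEval

lemma getLast?_eq (hE : D.AcyclicEval X a G B) : G.getLast? = some a := by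
  obtain ⟨-, -, -, -, -, -, -, -, -, hnil, hlast, -⟩ := hE
  exact hlast fun hG => by simpa using hnil hG

lemma forall_mem (hE : D.AcyclicEval X a G B) : ∀ b ∈ G, b ∈ X := by
  obtain ⟨-, -, -, -, -, -, hGX, -⟩ := hE
  exact hGX

lemma exists_decisivelyIn (hE : D.AcyclicEval X a G B) (i : ℕ) (hi : i < G.length) :
    ∃ v, D.DecisivelyIn v (G.get ⟨i, hi⟩) ∧
      tset v ⊆ {b | ∃ j, ∃ hj : j < G.length, j < i ∧ G.get ⟨j, hj⟩ = b} ∧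
      fset v ⊆ B := by
  obtain ⟨pd, hMS, -, -, -, -, hGX, -, hsome, -, -, horder, -, -, hB⟩ := hE
  have hiG := G.get_mem ⟨i, hi⟩
  obtain ⟨v, hv⟩ := Option.ne_none_iff_exists'.mp (hsome _ hiG)
  refine ⟨v, ((hMS.1 _ (hGX _ hiG)).1 v hv).1.1, fun b hb => ?_, fun b hb => ?_⟩
  · simpa using horder i hi (by rwa [pdT_eq_tset hv])
  · rw [hB]
    exact Or.inr (Set.mem_biUnion hiG (by rwa [pdF_eq_fset hv]))

end AcyclicEval

end ADF

namespace AFN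

variable (fn : AFN α)

def Supports (T : Set α) (a : α) : Prop := ∀ B, fn.N B a → (B ∩ T).Nonempty

/-- `stage X (k + 1)` consists of the arguments of `X` that are powerful via a sequence of
length at most `k + 1`. -/
def stage (X : Set α) : ℕ → Set α
  | 0 => ∅
  | k + 1 => {a ∈ X | fn.Supports (stage X k) a}

noncomputable def rank (X : Set α) (a : α) : ℕ := sInf {k | a ∈ fn.stage X k}

variable {fn} {X T : Set α} {a : α} {v : Interp α} {G : List α} {B : Set α}

lemma Supports.mono {T' : Set α} (h : fn.Supports T a) (hT : T ⊆ T') : fn.Supports T' a :=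
  fun B hB => (h B hB).mono (Set.inter_subset_inter_right B hT)

lemma exists_necessity_of_minimal_supports (hT : Minimal (fn.Supports · a) T) {t : α}
    (ht : t ∈ T) : ∃ B, fn.N B a ∧ t ∈ B := by
  by_contra! hno
  have hsupp : fn.Supports (T \ {t}) a := fun B hB => by
    obtain ⟨s, hsB, hsT⟩ := hT.prop B hB
    exact ⟨s, hsB, hsT, fun hst => hno B hB (hst ▸ hsB)⟩
  have hT' := hT.eq_of_le hsupp Set.sdiff_subset
  exact (hT'.symm ▸ ht : t ∈ T \ {t}).2 rfl

lemma StronglyConsistent.not_attacks_of_minimal_supports (h : fn.StronglyConsistent)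
    (hT : Minimal (fn.Supports · a) T) {t : α} (ht : t ∈ T) : ¬ fn.R t a := fun hR => by
  obtain ⟨B, hB, htB⟩ := exists_necessity_of_minimal_supports hT ht
  exact Set.eq_empty_iff_forall_notMem.mp (h a) t ⟨⟨B, htB, hB⟩, hR⟩

lemma toADF_evalCond_eq_true_iff {w : Interp α} :
    fn.toADF.evalCond a w = true ↔
      (∀ p ∈ tset w ∩ fn.toADF.par a, ¬ fn.R p a) ∧
      fn.Supports (tset w ∩ fn.toADF.par a) a := by
  simp [ADF.evalCond, AFN.toADF, Supports, Set.nonempty_iff_ne_empty]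

lemma toADF_decisivelyIn_iff :
    fn.toADF.DecisivelyIn v a ↔ {b | fn.R b a} ⊆ fset v ∧ fn.Supports (tset v) a := by
  constructor
  · intro hv
    -- complete `v` on the parents of `a` once with all undecided ones f, once with them t
    have hfalse := hv _ (completion_mkInterp (Set.empty_subset (fn.toADF.par a))
      (Set.empty_disjoint _))
    have htrue := hv _ (completion_mkInterp (U := fn.toADF.par a \ idom v) Set.sdiff_subset
      Set.disjoint_sdiff_left)
    simp only [toADF_evalCond_eq_true_iff, tset_mkInterp, Set.union_empty] at hfalse htrue
    refine ⟨fun b hb => ?_, hfalse.2.mono Set.inter_subset_left⟩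
    have hbpar : b ∈ fn.toADF.par a := Or.inl hb
    by_contra hbf
    refine htrue.1 b ⟨?_, hbpar⟩ hb
    by_cases hbv : b ∈ idom v
    · obtain ⟨c, hc⟩ := Option.ne_none_iff_exists'.mp hbv
      cases c
      · exact absurd hc hbf
      · exact Or.inl hc
    · exact Or.inr ⟨hbpar, hbv⟩
  · rintro ⟨hatt, hsupp⟩ w hw
    rw [toADF_evalCond_eq_true_iff]
    refine ⟨fun p hp hR => ?_, fun B hB => ?_⟩
    · have hfalse := hw.eq_of_mem_fset (hatt hR)
      simp_all [tset]
    · obtain ⟨t, htB, htv⟩ := hsupp B hB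
      exact ⟨t, htB, hw.tset_subset htv, Or.inr ⟨B, htB, hB⟩⟩

lemma toADF_minDecIn_mkInterp (h : fn.StronglyConsistent) (hT : Minimal (fn.Supports · a) T) :
    fn.toADF.MinDecIn (mkInterp T {b | fn.R b a}) a := by
  have hfset : fset (mkInterp T {b | fn.R b a}) = {b | fn.R b a} := by
    rw [fset_mkInterp, sdiff_eq_left, Set.disjoint_left]
    exact fun b hR hbT => h.not_attacks_of_minimal_supports hT hbT hR
  refine ⟨toADF_decisivelyIn_iff.mpr ⟨hfset.ge, by simpa using hT.prop⟩,
    fun w hw ht hf => ?_⟩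
  obtain ⟨hatt, hsupp⟩ := toADF_decisivelyIn_iff.mp hw
  rw [tset_mkInterp] at ht ⊢
  exact ⟨hT.eq_of_le hsupp ht, hf.antisymm (hfset.symm ▸ hatt)⟩

lemma stage_subset : ∀ k, fn.stage X k ⊆ X
  | 0 => Set.empty_subset X
  | _ + 1 => fun _ ha => ha.1

lemma monotone_stage : Monotone (fn.stage X) := by
  refine monotone_nat_of_le_succ fun k => ?_
  induction k with
  | zero => exact Set.empty_subset _
  | succ k ih => exact fun a ha => ⟨ha.1, ha.2.mono ih⟩

lemma Coherent.exists_mem_stage (hX : fn.Coherent X) (ha : a ∈ X) :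
    ∃ k, a ∈ fn.stage X k := by
  obtain ⟨-, G, -, hGX, hlast, hpow⟩ := hX a ha
  have hstage : ∀ i (hi : i < G.length), G[i] ∈ fn.stage X (i + 1) := by
    intro i
    induction i using Nat.strong_induction_on with
    | _ i ih =>
      refine fun hi => ⟨hGX _ (G.getElem_mem hi), fun B hB => ?_⟩
      obtain ⟨j, hj, hji, hjB⟩ := hpow i hi B hB
      exact ⟨_, hjB, monotone_stage hji (ih j hji hj)⟩
  obtain ⟨hi, hGa⟩ := List.getElem?_eq_some_iff.mp (List.getLast?_eq_getElem? ▸ hlast)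
  exact ⟨_, hGa ▸ hstage _ hi⟩

lemma Coherent.supports_lt_rank (hX : fn.Coherent X) (ha : a ∈ X) :
    fn.Supports {b ∈ X | fn.rank X b < fn.rank X a} a := by
  have hmem : a ∈ fn.stage X (fn.rank X a) := Nat.sInf_mem (hX.exists_mem_stage ha)
  obtain ⟨k, hk⟩ : ∃ k, fn.rank X a = k + 1 :=
    Nat.exists_eq_succ_of_ne_zero fun h0 => by rw [h0] at hmem; exact hmem
  rw [hk] at hmem ⊢
  exact hmem.2.mono fun b hb => ⟨fn.stage_subset k hb, Nat.lt_succ_of_le (Nat.sInf_le hb)⟩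

lemma toADF_pdAcyclicCF_of_stronglyCoherent [Finite α] (h : fn.StronglyConsistent)
    (hX : fn.StronglyCoherent X) : fn.toADF.PDAcyclicCF X := by
  obtain ⟨hcf, hcoh⟩ := hX
  choose! T hTle hTmin using fun a (ha : a ∈ X) =>
    exists_minimal_le_of_wellFoundedLT (fn.Supports · a) _ (hcoh.supports_lt_rank ha)
  let pd : α → Option (Interp α) :=
    fun a => if a ∈ X then some (mkInterp (T a) {b | fn.R b a}) else none
  have hpd : ∀ a ∈ X, pd a = some (mkInterp (T a) {b | fn.R b a}) := fun a ha => if_pos ha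
  refine ADF.pdAcyclicCF_of_rank (fn.rank X) (pd := pd) (fun a ha => ⟨fun v hv => ?_, ?_⟩)
    (fun a ha => by simp [hpd a ha]) (fun a ha => ?_) (fun a ha b hb => ?_)
  · rw [hpd a ha, Option.some_inj] at hv
    subst hv
    refine ⟨toADF_minDecIn_mkInterp h (hTmin a ha), ?_⟩
    rw [tset_mkInterp]
    exact fun b hb => (hTle a ha hb).1
  · simp [hpd a ha]
  · rw [pdF_eq_fset (hpd a ha), fset_mkInterp]
    exact Set.eq_empty_of_forall_notMem fun b ⟨⟨hR, _⟩, hb⟩ => hcf ⟨b, hb, a, ha, hR⟩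
  · rw [pdT_eq_tset (hpd a ha), tset_mkInterp] at hb
    exact (hTle a ha hb).2

lemma powerfulSeq_of_toADF_acyclicEval (hE : fn.toADF.AcyclicEval X a G B) :
    fn.PowerfulSeq X G a := by
  refine ⟨List.ne_nil_of_mem (List.mem_of_getLast? hE.getLast?_eq), hE.forall_mem,
    hE.getLast?_eq, fun i hi B' hB' => ?_⟩
  obtain ⟨v, hv, hT, -⟩ := hE.exists_decisivelyIn i hi
  obtain ⟨b, hbB, hbv⟩ := (toADF_decisivelyIn_iff.mp hv).2 B' hB'
  obtain ⟨j, hj, hji, rfl⟩ := hT hbv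
  exact ⟨j, hj, hji, hbB⟩

lemma attackers_subset_of_toADF_acyclicEval (hE : fn.toADF.AcyclicEval X a G B) :
    {b | fn.R b a} ⊆ B := by
  obtain ⟨hi, hGa⟩ :=
    List.getElem?_eq_some_iff.mp (List.getLast?_eq_getElem? ▸ hE.getLast?_eq)
  obtain ⟨v, hv, -, hF⟩ := hE.exists_decisivelyIn _ hi
  rw [List.get_eq_getElem, hGa] at hv
  exact fun b hb => hF ((toADF_decisivelyIn_iff.mp hv).1 hb)

lemma stronglyCoherent_of_toADF_pdAcyclicCF (hX : fn.toADF.PDAcyclicCF X) :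
    fn.StronglyCoherent X := by
  refine ⟨fun ⟨b, hb, c, hc, hbc⟩ => ?_, fun a ha => ?_⟩
  · obtain ⟨G, B, hE, hBX⟩ := hX c hc
    exact Set.eq_empty_iff_forall_notMem.mp hBX b
      ⟨attackers_subset_of_toADF_acyclicEval hE hbc, hb⟩
  · obtain ⟨G, B, hE, -⟩ := hX a ha
    exact ⟨ha, G, powerfulSeq_of_toADF_acyclicEval hE⟩

end AFN

end Dialectical

open Dialectical in
/-- `X` is strongly coherent in a strongly consistent AFN iff it is a
pd-acyclic conflict-free extension of the corresponding ADF. -/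
theorem afn_toADF_stronglyCoherent_iff_pdAcyclicCF
    {α : Type} [Fintype α] (fn : AFN α) (h : fn.StronglyConsistent) (X : Set α) :
    fn.StronglyCoherent X ↔ fn.toADF.PDAcyclicCF X :=
  ⟨fn.toADF_pdAcyclicCF_of_stronglyCoherent h, fn.stronglyCoherent_of_toADF_pdAcyclicCF⟩
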